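/- For every n ≥ 1, the Clifford group (the normalizer of the n-qubit Pauli group P_n in U(2^n)) is not dense in the unitary group U(2^n); that is, the topological closure of the Clifford group is a proper subset of U(2^n). In particular, the Clifford group is not universal for quantum computation on n qubits. -/

import Mathlib

/-! Every Pauli operator has Gaussian-integer entries, so a Clifford unitary `U` conjugates
`X₁` to a matrix with Gaussian-integer entries. This is a closed condition on `U`, so it
persists on the closure of the Clifford group. The `T` gate `diag(1, e^{iπ/4})` on the first
qubit violates it: it conjugates `X₁` to a matrix with entry `e^{iπ/4}`, whose real part
`√2/2` is not an integer. -/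

/-- The matrix of the Pauli `X` operator acting on the `j`-th qubit of `n` qubits
(and as the identity on all other tensor factors). -/
noncomputable def XMat (n : ℕ) (j : Fin n) :
    Matrix (Fin n → Fin 2) (Fin n → Fin 2) ℂ :=
  Matrix.of fun v w => if v j ≠ w j ∧ ∀ i, i ≠ j → v i = w i then 1 else 0

/-- The matrix of the Pauli `Z` operator acting on the `j`-th qubit of `n` qubits
(and as the identity on all other tensor factors). -/
noncomputable def ZMat (n : ℕ) (j : Fin n) :
    Matrix (Fin n → Fin 2) (Fin n → Fin 2) ℂ :=
  Matrix.of fun v w => if v = w then (if v j = 1 then -1 else 1) else 0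

/-- The `n`-qubit Pauli group: the subgroup of the unitary group `U(2^n)` generated by
`i·I` together with `X_j` and `Z_j` for each qubit `j`. -/
noncomputable def PauliGroup (n : ℕ) :
    Subgroup (Matrix.unitaryGroup (Fin n → Fin 2) ℂ) :=
  Subgroup.closure { U : Matrix.unitaryGroup (Fin n → Fin 2) ℂ |
    (U : Matrix (Fin n → Fin 2) (Fin n → Fin 2) ℂ)
        = Complex.I • (1 : Matrix (Fin n → Fin 2) (Fin n → Fin 2) ℂ)
    ∨ ∃ j : Fin n, (U : Matrix (Fin n → Fin 2) (Fin n → Fin 2) ℂ) = XMat n j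
        ∨ (U : Matrix (Fin n → Fin 2) (Fin n → Fin 2) ℂ) = ZMat n j }

open Matrix Complex
open scoped Real

section EntriesIn

variable {n α : Type*} [Fintype n] [DecidableEq n] [CommRing α] [StarRing α]

def Matrix.unitaryGroupWithEntriesIn (S : StarSubsemiring α) : Subgroup (unitaryGroup n α) where
  carrier := {U | ∀ i j, (U : Matrix n n α) i j ∈ S}
  one_mem' i j := by
    rw [UnitaryGroup.one_apply, one_apply]
    split_ifs
    exacts [one_mem S, zero_mem S]
  mul_mem' ha hb i j := by
    rw [UnitaryGroup.mul_apply, mul_apply]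
    exact sum_mem fun k _ => mul_mem (ha i k) (hb k j)
  inv_mem' ha i j := by
    rw [UnitaryGroup.inv_apply, star_apply]
    exact star_mem (ha j i)

theorem Matrix.isClosed_unitaryGroupWithEntriesIn [TopologicalSpace α] {S : StarSubsemiring α}
    (hS : IsClosed (S : Set α)) :
    IsClosed (unitaryGroupWithEntriesIn (n := n) S : Set (unitaryGroup n α)) := by
  have : (unitaryGroupWithEntriesIn (n := n) S : Set (unitaryGroup n α)) =
      ⋂ i, ⋂ j, (fun U : unitaryGroup n α => (U : Matrix n n α) i j) ⁻¹' S := by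
    ext U
    simp [unitaryGroupWithEntriesIn]
  rw [this]
  exact isClosed_iInter fun i => isClosed_iInter fun j =>
    hS.preimage (continuous_subtype_val.matrix_elem i j)

theorem Equiv.Perm.permMatrix_mem_unitaryGroup (σ : Equiv.Perm n) :
    σ.permMatrix α ∈ unitaryGroup n α := by
  rw [mem_unitaryGroup_iff, star_eq_conjTranspose, conjTranspose_permMatrix,
    ← permMatrix_mul, inv_mul_cancel, permMatrix_one]

theorem Matrix.diagonal_mem_unitaryGroup {d : n → α} (hd : ∀ i, d i ∈ unitary α) :
    diagonal d ∈ unitaryGroup n α := by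
  rw [mem_unitaryGroup_iff, star_eq_conjTranspose, diagonal_conjTranspose,
    diagonal_mul_diagonal, ← diagonal_one]
  exact congrArg diagonal (funext fun i => Unitary.mul_star_self_of_mem (hd i))

end EntriesIn

theorem closure_normalizer_subset_setOf_conj_mem {G : Type*} [Group G]
    [TopologicalSpace G] [IsTopologicalGroup G] {s K : Set G} (hsK : s ⊆ K) (hK : IsClosed K)
    {x : G} (hx : x ∈ s) :
    closure (Subgroup.normalizer s : Set G) ⊆ {g | g * x * g⁻¹ ∈ K} :=
  closure_minimal (fun _ hg => hsK ((Subgroup.mem_set_normalizer_iff.mp hg x).mp hx))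
    (hK.preimage (by fun_prop))

def gaussianIntegers : StarSubsemiring ℂ where
  toSubsemiring := GaussianInt.toComplex.rangeS
  star_mem' := by
    rintro _ ⟨x, rfl⟩
    exact ⟨star x, GaussianInt.toComplex_star x⟩

theorem mem_gaussianIntegers_iff {z : ℂ} :
    z ∈ gaussianIntegers ↔ z.re ∈ Set.range ((↑) : ℤ → ℝ) ∧ z.im ∈ Set.range ((↑) : ℤ → ℝ) := by
  constructor
  · rintro ⟨x, rfl⟩
    exact ⟨⟨x.re, GaussianInt.intCast_re x⟩, ⟨x.im, GaussianInt.intCast_im x⟩⟩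
  · rintro ⟨⟨a, ha⟩, ⟨b, hb⟩⟩
    exact ⟨⟨a, b⟩, Complex.ext (by simp [ha]) (by simp [hb])⟩

theorem isClosed_gaussianIntegers : IsClosed (gaussianIntegers : Set ℂ) := by
  have hZ := Int.isClosedEmbedding_coe_real.isClosed_range
  have : (gaussianIntegers : Set ℂ) =
      re ⁻¹' Set.range ((↑) : ℤ → ℝ) ∩ im ⁻¹' Set.range ((↑) : ℤ → ℝ) := by
    ext z
    exact mem_gaussianIntegers_iff
  rw [this]
  exact (hZ.preimage continuous_re).inter (hZ.preimage continuous_im)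

theorem exp_pi_div_four_mul_I_notMem_gaussianIntegers :
    exp (↑(π / 4) * I) ∉ gaussianIntegers := by
  rintro hmem
  obtain ⟨⟨a, ha⟩, -⟩ := mem_gaussianIntegers_iff.mp hmem
  rw [exp_ofReal_mul_I_re, Real.cos_pi_div_four] at ha
  have h0 : (0 : ℝ) < a := by rw [ha]; positivity
  have h1 : (a : ℝ) < 1 := by
    rw [ha]; nlinarith [Real.sq_sqrt (show (0 : ℝ) ≤ 2 by norm_num), Real.sqrt_nonneg 2]
  have : (0 : ℤ) < a := by exact_mod_cast h0
  have : a < (1 : ℤ) := by exact_mod_cast h1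
  omega

theorem exp_ofReal_mul_I_mem_unitary (x : ℝ) : exp (x * I) ∈ unitary ℂ := by
  rw [Unitary.mem_iff, star_def, ← exp_conj, map_mul, conj_ofReal, conj_I, ← exp_add, ← exp_add]
  constructor <;> ring_nf <;> exact exp_zero

theorem XMat_eq_permMatrix (n : ℕ) (j : Fin n) :
    XMat n j = (Equiv.addRight (Pi.single j 1)).permMatrix ℂ := by
  ext v w
  have hflip : ∀ a b : Fin 2, a ≠ b ↔ a + 1 = b := by decide
  have key : (v j ≠ w j ∧ ∀ i, i ≠ j → v i = w i) ↔ v + Pi.single j 1 = w := by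
    rw [hflip, funext_iff]
    constructor
    · rintro ⟨hj, hi⟩ i
      rcases eq_or_ne i j with rfl | hij
      · simpa using hj
      · simpa [hij] using hi i hij
    · intro h
      exact ⟨by simpa using h j, fun i hij => by simpa [hij] using h i⟩
  simp [XMat, Equiv.Perm.permMatrix, PEquiv.toMatrix_apply, key]

theorem XMat_mem_unitaryGroup (n : ℕ) (j : Fin n) :
    XMat n j ∈ unitaryGroup (Fin n → Fin 2) ℂ :=
  XMat_eq_permMatrix n j ▸ Equiv.Perm.permMatrix_mem_unitaryGroup _

theorem pauliGroup_le_unitaryGroupWithEntriesIn_gaussianIntegers (n : ℕ) :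
    PauliGroup n ≤ unitaryGroupWithEntriesIn gaussianIntegers := by
  have hI : I ∈ gaussianIntegers := ⟨⟨0, 1⟩, by simp [GaussianInt.toComplex_def']⟩
  have hneg : (-1 : ℂ) ∈ gaussianIntegers := ⟨-1, by simp⟩
  rw [PauliGroup, Subgroup.closure_le]
  rintro U (h | ⟨j, h | h⟩) v w <;> rw [h]
  · rw [Matrix.smul_apply, one_apply, smul_eq_mul]
    split_ifs <;> simp only [mul_one, mul_zero]
    exacts [hI, zero_mem _]
  · rw [XMat, of_apply]
    split_ifs
    exacts [one_mem _, zero_mem _]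
  · rw [ZMat, of_apply]
    split_ifs
    exacts [hneg, one_mem _, zero_mem _]

def phaseGate {n : ℕ} (j : Fin n) (ω : ℂ) : Matrix (Fin n → Fin 2) (Fin n → Fin 2) ℂ :=
  diagonal fun v => if v j = 1 then ω else 1

theorem phaseGate_mem_unitaryGroup {n : ℕ} (j : Fin n) {ω : ℂ} (hω : ω ∈ unitary ℂ) :
    phaseGate j ω ∈ unitaryGroup (Fin n → Fin 2) ℂ :=
  diagonal_mem_unitaryGroup fun v => by
    split_ifs
    exacts [hω, one_mem _]

theorem phaseGate_mul_XMat_mul_star_apply {n : ℕ} (j : Fin n) (ω : ℂ) {v : Fin n → Fin 2}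
    (hv : v j = 1) :
    (phaseGate j ω * XMat n j * star (phaseGate j ω)) v (v + Pi.single j 1) = ω := by
  simp [phaseGate, star_eq_conjTranspose, diagonal_conjTranspose, mul_diagonal, diagonal_mul,
    XMat_eq_permMatrix, Equiv.Perm.permMatrix, PEquiv.toMatrix_apply, hv]

/-- The Clifford group (the normalizer of the `n`-qubit Pauli group in `U(2^n)`) is not
dense in the unitary group `U(2^n)`: its topological closure is a proper subset of
`U(2^n)`.  In particular, the Clifford group is not universal for quantum computation. -/
theorem clifford_not_dense (n : ℕ) (hn : 1 ≤ n) :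
    closure ((Subgroup.normalizer (PauliGroup n : Set (Matrix.unitaryGroup (Fin n → Fin 2) ℂ)) :
        Subgroup (Matrix.unitaryGroup (Fin n → Fin 2) ℂ)) :
        Set (Matrix.unitaryGroup (Fin n → Fin 2) ℂ))
      ⊂ (Set.univ : Set (Matrix.unitaryGroup (Fin n → Fin 2) ℂ)) := by
  let j : Fin n := ⟨0, hn⟩
  let X : unitaryGroup (Fin n → Fin 2) ℂ := ⟨XMat n j, XMat_mem_unitaryGroup n j⟩
  let T : unitaryGroup (Fin n → Fin 2) ℂ :=
    ⟨phaseGate j (exp (↑(π / 4) * I)),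
      phaseGate_mem_unitaryGroup j (exp_ofReal_mul_I_mem_unitary _)⟩
  have hX : X ∈ PauliGroup n := Subgroup.subset_closure (Or.inr ⟨j, Or.inl rfl⟩)
  have hTXT : T * X * T⁻¹ ∉ unitaryGroupWithEntriesIn gaussianIntegers := fun h => by
    have hentry := h (fun _ => 1) ((fun _ => 1) + Pi.single j 1)
    rw [UnitaryGroup.mul_apply, UnitaryGroup.mul_val, UnitaryGroup.inv_apply,
      phaseGate_mul_XMat_mul_star_apply j _ rfl] at hentry
    exact exp_pi_div_four_mul_I_notMem_gaussianIntegers hentry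
  refine Set.ssubset_univ_iff.mpr fun hdense => hTXT ?_
  exact closure_normalizer_subset_setOf_conj_mem
    (pauliGroup_le_unitaryGroupWithEntriesIn_gaussianIntegers n)
    (isClosed_unitaryGroupWithEntriesIn isClosed_gaussianIntegers) hX (hdense ▸ Set.mem_univ T)
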